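/- Let S be a finite semigroup that is a left regular band of groups, with idempotent-power map ω. Then S is strict, i.e. ω(s·t) = (ω s)·(ω t) for all s,t ∈ S, if and only if S is a union of a band of groups; concretely, if and only if there exist a semigroup B in which every element is idempotent (a band) and a surjective semigroup homomorphism φ : S → B such that every fiber of φ is a group: for each b ∈ B there exists e ∈ S with φ(e) = b such that for every s with φ(s) = b one has e·s = s and s·e = s, and there exists t with φ(t) = b, s·t = e and t·s = e. -/

import Mathlib

/-!
The band is the set of idempotents, with `ω` as the map onto it. Idempotents are closed under
multiplication by (LRBG2), so strictness says exactly that `ω` is a homomorphism onto this band;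
its fiber over `x` is `G_x`, a group with identity `x` in which the inverse of `s` is a power of `s`
(it stays in `G_x` because strictness makes `ω` constant on powers).
Conversely, a homomorphism to a band is constant on powers, so `φ ∘ ω = φ`; both `ω (s * t)` and
`ω s * ω t` are then idempotents in the fiber of `s * t`, and a group has only one idempotent.
-/

section Semigroup

variable {S : Type*} [Semigroup S]

lemma iterate_mul_right_succ (s : S) (n : ℕ) :
    (· * s)^[n + 1] s = (· * s)^[n] s * s :=
  Function.iterate_succ_apply' _ n s

lemma iterate_mul_right_mul_comm (s : S) (n : ℕ) :
    (· * s)^[n] s * s = s * (· * s)^[n] s := by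
  induction n with
  | zero => rfl
  | succ n ih => rw [iterate_mul_right_succ, ih, mul_assoc, ih]

lemma IsIdempotentElem.iterate_mul_right {e : S} (he : IsIdempotentElem e) (n : ℕ) :
    (· * e)^[n] e = e := by
  induction n with
  | zero => rfl
  | succ n ih => rw [iterate_mul_right_succ, ih, he.eq]

lemma map_iterate_mul_right {B : Type*} (φ : S → B) (mul : B → B → B)
    (hφ : ∀ a b : S, φ (a * b) = mul (φ a) (φ b)) (hidem : ∀ s : S, mul (φ s) (φ s) = φ s)
    (s : S) (n : ℕ) : φ ((· * s)^[n] s) = φ s := by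
  induction n with
  | zero => rfl
  | succ n ih => rw [iterate_mul_right_succ, hφ, ih, hidem]

lemma IsIdempotentElem.eq_of_mul_eq {x e t : S} (hx : IsIdempotentElem x) (hxe : x * e = x)
    (hxt : x * t = e) : x = e :=
  calc x = x * (x * t) := by rw [hxt, hxe]
    _ = e := by rw [← mul_assoc, hx.eq, hxt]

end Semigroup

section LRBG

variable {S : Type*} [Semigroup S] {ω : S → S}

lemma omega_eq_self_of_isIdempotentElem (hpow : ∀ s : S, ∃ n : ℕ, ω s = (· * s)^[n] s)
    {e : S} (he : IsIdempotentElem e) : ω e = e := by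
  obtain ⟨n, hn⟩ := hpow e
  rw [hn, he.iterate_mul_right]

lemma mul_omega_self (hpow : ∀ s : S, ∃ n : ℕ, ω s = (· * s)^[n] s)
    (lrbg1 : ∀ s : S, ω s * s = s) (s : S) : s * ω s = s := by
  obtain ⟨n, hn⟩ := hpow s
  rw [hn, ← iterate_mul_right_mul_comm, ← hn, lrbg1]

lemma isIdempotentElem_mul_of_lrbg (hpow : ∀ s : S, ∃ n : ℕ, ω s = (· * s)^[n] s)
    (lrbg2 : ∀ s t : S, s * t * ω s = s * t) {e f : S} (he : IsIdempotentElem e)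
    (hf : IsIdempotentElem f) : IsIdempotentElem (e * f) := by
  have hefe : e * f * e = e * f := by
    simpa only [omega_eq_self_of_isIdempotentElem hpow he] using lrbg2 e f
  calc e * f * (e * f) = e * f * e * f := by rw [← mul_assoc]
    _ = e * f := by rw [hefe, mul_assoc, hf.eq]

lemma exists_iterate_mul_right_mul_eq_omega (hidem : ∀ s : S, ω s * ω s = ω s)
    (hpow : ∀ s : S, ∃ n : ℕ, ω s = (· * s)^[n] s) (s : S) :
    ∃ n : ℕ, (· * s)^[n] s * s = ω s := by
  obtain ⟨n, hn⟩ := hpow s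
  cases n with
  | zero =>
    have hs : ω s = s := hn
    exact ⟨0, by simpa only [Function.iterate_zero_apply, hs] using hidem s⟩
  | succ m => exact ⟨m, by rw [hn, iterate_mul_right_succ]⟩

lemma omega_mul_of_band_of_groups (hpow : ∀ s : S, ∃ n : ℕ, ω s = (· * s)^[n] s)
    (lrbg2 : ∀ s t : S, s * t * ω s = s * t) (hidem : ∀ s : S, ω s * ω s = ω s)
    {B : Type*} (mulB : B → B → B) (φ : S → B) (hband : ∀ b : B, mulB b b = b)
    (hhom : ∀ a b : S, φ (a * b) = mulB (φ a) (φ b))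
    (hfib : ∀ b : B, ∃ e : S, φ e = b ∧
      ∀ s : S, φ s = b → e * s = s ∧ s * e = s ∧ ∃ t : S, φ t = b ∧ s * t = e ∧ t * s = e)
    (s t : S) : ω (s * t) = ω s * ω t := by
  have hφω (u : S) : φ (ω u) = φ u := by
    obtain ⟨n, hn⟩ := hpow u
    rw [hn, map_iterate_mul_right φ mulB hhom (fun _ => hband _)]
  obtain ⟨e, -, he⟩ := hfib (φ (s * t))
  have eq_e {x : S} (hx : φ x = φ (s * t)) (hxi : IsIdempotentElem x) : x = e := by
    obtain ⟨-, hxe, y, -, hxy, -⟩ := he x hx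
    exact hxi.eq_of_mul_eq hxe hxy
  have hφ : φ (ω s * ω t) = φ (s * t) := by rw [hhom, hφω, hφω, ← hhom]
  rw [eq_e (hφω _) (hidem _),
    eq_e hφ (isIdempotentElem_mul_of_lrbg hpow lrbg2 (hidem s) (hidem t))]

end LRBG

theorem lrbg_strict_iff_band_of_groups_general {S : Type u} [Semigroup S]
    (ω : S → S)
    (hidem : ∀ s : S, ω s * ω s = ω s)
    (hpow : ∀ s : S, ∃ n : ℕ, ω s = (fun t => t * s)^[n] s)
    (lrbg1 : ∀ s : S, ω s * s = s)
    (lrbg2 : ∀ s t : S, s * t * ω s = s * t) :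
    (∀ s t : S, ω (s * t) = ω s * ω t) ↔
    ∃ (B : Type u) (mulB : B → B → B) (φ : S → B),
      (∀ a b c : B, mulB (mulB a b) c = mulB a (mulB b c)) ∧
      (∀ b : B, mulB b b = b) ∧
      (∀ a b : S, φ (a * b) = mulB (φ a) (φ b)) ∧
      Function.Surjective φ ∧
      (∀ b : B, ∃ e : S, φ e = b ∧
        ∀ s : S, φ s = b →
          e * s = s ∧ s * e = s ∧ ∃ t : S, φ t = b ∧ s * t = e ∧ t * s = e) := by
  refine ⟨fun hstrict => ?_, fun ⟨B, mulB, φ, _, hband, hhom, _, hfib⟩ =>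
    omega_mul_of_band_of_groups hpow lrbg2 hidem mulB φ hband hhom hfib⟩
  refine ⟨{x : S // IsIdempotentElem x},
    fun x y => ⟨x * y, isIdempotentElem_mul_of_lrbg hpow lrbg2 x.2 y.2⟩,
    fun s => ⟨ω s, hidem s⟩, fun _ _ _ => Subtype.ext (mul_assoc _ _ _),
    fun x => Subtype.ext x.2, fun s t => Subtype.ext (hstrict s t),
    fun x => ⟨x, Subtype.ext (omega_eq_self_of_isIdempotentElem hpow x.2)⟩, ?_⟩
  rintro ⟨x, hx⟩
  refine ⟨x, Subtype.ext (omega_eq_self_of_isIdempotentElem hpow hx), fun s hs => ?_⟩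
  obtain rfl : ω s = x := congrArg Subtype.val hs
  obtain ⟨n, hn⟩ := exists_iterate_mul_right_mul_eq_omega hidem hpow s
  refine ⟨lrbg1 s, mul_omega_self hpow lrbg1 s, (· * s)^[n] s,
    Subtype.ext (map_iterate_mul_right ω (· * ·) hstrict hidem s n), ?_, hn⟩
  rw [← iterate_mul_right_mul_comm, hn]

/-- A finite LRBG is strict (`ω(s·t) = (ω s)·(ω t)`) if and only if
it is a union of a band of groups: there is a band `B` (an associative multiplication
all of whose elements are idempotent) and a surjective semigroup homomorphism
`φ : S → B` all of whose fibers are groups. -/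
theorem lrbg_strict_iff_band_of_groups {S : Type u} [Semigroup S] [Fintype S]
    (ω : S → S)
    (hidem : ∀ s : S, ω s * ω s = ω s)
    (hpow : ∀ s : S, ∃ n : ℕ, ω s = (fun t => t * s)^[n] s)
    (lrbg1 : ∀ s : S, ω s * s = s)
    (lrbg2 : ∀ s t : S, s * t * ω s = s * t) :
    (∀ s t : S, ω (s * t) = ω s * ω t) ↔
    ∃ (B : Type u) (mulB : B → B → B) (φ : S → B),
      (∀ a b c : B, mulB (mulB a b) c = mulB a (mulB b c)) ∧
      (∀ b : B, mulB b b = b) ∧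
      (∀ a b : S, φ (a * b) = mulB (φ a) (φ b)) ∧
      Function.Surjective φ ∧
      (∀ b : B, ∃ e : S, φ e = b ∧
        ∀ s : S, φ s = b →
          e * s = s ∧ s * e = s ∧ ∃ t : S, φ t = b ∧ s * t = e ∧ t * s = e) :=
  lrbg_strict_iff_band_of_groups_general ω hidem hpow lrbg1 lrbg2
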